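/- Let F₃ be the free group on three generators a, b, c, and define endomorphisms of F₃ by: d_α : a ↦ a, b ↦ ab, c ↦ ac; e_α : a ↦ a, b ↦ a⁻¹b, c ↦ a⁻¹c; d_β : a ↦ b⁻¹a, b ↦ b, c ↦ c; e_γ : a ↦ ac, b ↦ b, c ↦ c. Then for all natural numbers h and k, the composite endomorphism φ = e_α^h ∘ e_γ^k ∘ d_β^{1+k} ∘ d_α (applying d_α first) satisfies φ(b) = (b⁻¹a^{h})^{1+k} · a · (a^{−h} c)^k · a^{−h} · b. -/

import Mathlib

/-! Each of the four twists fixes two generators and multiplies the third on one side by an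
element it fixes, so its `n`-th power multiplies by the `n`-th power of that element. Pushing `b`
through `d_α`, `d_β^{1+k}`, `e_γ^k` and `e_α^h` with these closed forms produces the word. -/

namespace Stmt6

/-- Generators `a = ᾱ`, `b = β̄`, `c = γ̄` of the free group `F₃`. -/
def a : FreeGroup (Fin 3) := FreeGroup.of 0
def b : FreeGroup (Fin 3) := FreeGroup.of 1
def c : FreeGroup (Fin 3) := FreeGroup.of 2

/-- The endomorphism `d_α : a ↦ a, b ↦ ab, c ↦ ac`. -/
def dAlpha : Monoid.End (FreeGroup (Fin 3)) := FreeGroup.lift ![a, a * b, a * c]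

/-- The endomorphism `e_α = d_α⁻¹ : a ↦ a, b ↦ a⁻¹b, c ↦ a⁻¹c`. -/
def eAlpha : Monoid.End (FreeGroup (Fin 3)) := FreeGroup.lift ![a, a⁻¹ * b, a⁻¹ * c]

/-- The endomorphism `d_β : a ↦ b⁻¹a, b ↦ b, c ↦ c`. -/
def dBeta : Monoid.End (FreeGroup (Fin 3)) := FreeGroup.lift ![b⁻¹ * a, b, c]

/-- The endomorphism `e_γ = d_γ⁻¹ : a ↦ ac, b ↦ b, c ↦ c`. -/
def eGamma : Monoid.End (FreeGroup (Fin 3)) := FreeGroup.lift ![a * c, b, c]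

end Stmt6

namespace Monoid.End

variable {M : Type*} [Monoid M] (f : Monoid.End M) {x u : M}

theorem pow_apply_of_apply_eq_self (hx : f x = x) (n : ℕ) : (f ^ n) x = x := by
  rw [coe_pow]
  exact Function.iterate_fixed hx n

theorem pow_apply_of_apply_eq_mul_left (hu : f u = u) (hx : f x = u * x) (n : ℕ) :
    (f ^ n) x = u ^ n * x := by
  induction n with
  | zero => simp
  | succ n ih =>
    rw [pow_succ', coe_mul, Function.comp_apply, ih, map_mul, map_pow, hu, hx, pow_succ, mul_assoc]

theorem pow_apply_of_apply_eq_mul_right (hu : f u = u) (hx : f x = x * u) (n : ℕ) :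
    (f ^ n) x = x * u ^ n := by
  induction n with
  | zero => simp
  | succ n ih =>
    rw [pow_succ', coe_mul, Function.comp_apply, ih, map_mul, map_pow, hu, hx, pow_succ', mul_assoc]

end Monoid.End

namespace Stmt6

open Monoid.End

theorem dAlpha_b : dAlpha b = a * b := FreeGroup.lift_apply_of
theorem dBeta_a : dBeta a = b⁻¹ * a := FreeGroup.lift_apply_of
theorem dBeta_b : dBeta b = b := FreeGroup.lift_apply_of
theorem eGamma_a : eGamma a = a * c := FreeGroup.lift_apply_of
theorem eGamma_b : eGamma b = b := FreeGroup.lift_apply_of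
theorem eGamma_c : eGamma c = c := FreeGroup.lift_apply_of
theorem eAlpha_a : eAlpha a = a := FreeGroup.lift_apply_of
theorem eAlpha_b : eAlpha b = a⁻¹ * b := FreeGroup.lift_apply_of
theorem eAlpha_c : eAlpha c = a⁻¹ * c := FreeGroup.lift_apply_of

theorem dBeta_pow_a (n : ℕ) : (dBeta ^ n) a = b⁻¹ ^ n * a :=
  pow_apply_of_apply_eq_mul_left _ (by rw [map_inv, dBeta_b]) dBeta_a n

theorem eGamma_pow_a (n : ℕ) : (eGamma ^ n) a = a * c ^ n :=
  pow_apply_of_apply_eq_mul_right _ eGamma_c eGamma_a n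

theorem eAlpha_pow_b (n : ℕ) : (eAlpha ^ n) b = (a ^ n)⁻¹ * b := by
  rw [← inv_pow]
  exact pow_apply_of_apply_eq_mul_left _ (by rw [map_inv, eAlpha_a]) eAlpha_b n

theorem eAlpha_pow_c (n : ℕ) : (eAlpha ^ n) c = (a ^ n)⁻¹ * c := by
  rw [← inv_pow]
  exact pow_apply_of_apply_eq_mul_left _ (by rw [map_inv, eAlpha_a]) eAlpha_c n

/-- For `φ = e_α^h ∘ e_γ^k ∘ d_β^{1+k} ∘ d_α` (applying `d_α` first),
`φ(b) = (b⁻¹a^{h})^{1+k} · a · (a^{−h} c)^k · a^{−h} · b`. -/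
theorem stmt6 (h k : ℕ) :
    (eAlpha ^ h * eGamma ^ k * dBeta ^ (1 + k) * dAlpha) b =
      (b⁻¹ * a ^ h) ^ (1 + k) * a * ((a ^ h)⁻¹ * c) ^ k * (a ^ h)⁻¹ * b := by
  calc (eAlpha ^ h * eGamma ^ k * dBeta ^ (1 + k) * dAlpha) b
      = (eAlpha ^ h) ((eGamma ^ k) ((dBeta ^ (1 + k)) (a * b))) := by rw [← dAlpha_b]; rfl
    _ = (eAlpha ^ h) ((eGamma ^ k) (b⁻¹ ^ (1 + k) * a * b)) := by
      rw [map_mul, dBeta_pow_a, pow_apply_of_apply_eq_self _ dBeta_b]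
    _ = (eAlpha ^ h) (b⁻¹ ^ (1 + k) * (a * c ^ k) * b) := by
      simp only [map_mul, map_pow, map_inv, eGamma_pow_a, pow_apply_of_apply_eq_self _ eGamma_b]
    _ = _ := by
      simp only [map_mul, map_pow, map_inv, eAlpha_pow_b, eAlpha_pow_c,
        pow_apply_of_apply_eq_self _ eAlpha_a, mul_inv_rev, inv_inv, mul_assoc]

end Stmt6
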